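/- Let n ≥ 1 be an integer, φ = π/(2n), P = P(φ) = [[1, -tan φ],[0,0]], R = R(φ) the rotation by 2φ. Every finite product B_m B_{m-1} ⋯ B_1, where each B_i ∈ {P, R}, can be written as α · R^q · P^r · R^s, where α is a real number with |α| ≤ 1, q, s are non-negative integers, and r ∈ {0, 1}. -/

import Mathlib

/-!
Rotations compose additively, `R φ ^ q = R (q φ)`, and `P R^q P` collapses to a scalar multiple of
`P`, the scalar being `cos (2qφ) - tan φ sin (2qφ) = cos ((2q+1)φ) / cos φ`. Since `(2q+1)φ` is an odd
multiple of `π / 2n`, it lies at distance at least `φ` from `πℤ`, so this scalar has absolute value at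
most `1`. Hence the set of matrices `α R^q P^r R^s` with `|α| ≤ 1`, `r ≤ 1` contains the identity and
is stable under left multiplication by `P` and by `R`.
-/

open Real Matrix

noncomputable def P (φ : ℝ) : Matrix (Fin 2) (Fin 2) ℝ := !![1, -Real.tan φ; 0, 0]

noncomputable def R (φ : ℝ) : Matrix (Fin 2) (Fin 2) ℝ :=
  !![Real.cos (2*φ), -Real.sin (2*φ); Real.sin (2*φ), Real.cos (2*φ)]

noncomputable def opNorm (A : Matrix (Fin 2) (Fin 2) ℝ) : ℝ :=
  ‖Matrix.toEuclideanCLM (𝕜 := ℝ) A‖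

lemma R_zero : R 0 = 1 := by
  simp [R, Matrix.one_fin_two]

lemma R_add (a b : ℝ) : R (a + b) = R a * R b := by
  have h : 2 * (a + b) = 2 * a + 2 * b := by ring
  ext i j
  fin_cases i <;> fin_cases j <;>
    simp [R, Matrix.mul_apply, Fin.sum_univ_two, h, cos_add, sin_add] <;> ring

lemma R_pow (φ : ℝ) (q : ℕ) : R φ ^ q = R (q * φ) := by
  induction q with
  | zero => simp [R_zero]
  | succ k ih => rw [pow_succ, ih, ← R_add]; push_cast; ring_nf

lemma P_mul_R_mul_P (φ θ : ℝ) :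
    P φ * R θ * P φ = (cos (2 * θ) - tan φ * sin (2 * θ)) • P φ := by
  ext i j
  fin_cases i <;> fin_cases j <;> simp [P, R, Matrix.mul_apply, Fin.sum_univ_two, sub_eq_add_neg]

lemma abs_cos_le_cos_of_le_of_le_pi_sub {φ x : ℝ} (hφ : 0 ≤ φ) (hφx : φ ≤ x) (hxφ : x ≤ π - φ) :
    |cos x| ≤ cos φ := by
  rw [abs_le]
  constructor
  · have h := cos_le_cos_of_nonneg_of_le_pi (hφ.trans hφx) (by linarith) hxφ
    rw [cos_pi_sub] at h
    linarith
  · exact cos_le_cos_of_nonneg_of_le_pi hφ (by linarith) hφx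

lemma abs_cos_odd_mul_le {n m : ℕ} (hn : 0 < n) (hm : Odd m) :
    |cos (m * (π / (2 * n)))| ≤ cos (π / (2 * n)) := by
  set φ := π / (2 * n) with hφ_def
  have hφ : 0 ≤ φ := by positivity
  have h2nφ : (2 * n : ℝ) * φ = π := by rw [hφ_def]; field_simp
  set k := m % (2 * n)
  have hk_odd : Odd k := by
    rw [Nat.odd_iff, Nat.mod_mod_of_dvd _ (dvd_mul_right 2 n), ← Nat.odd_iff]; exact hm
  have hk_pos : (1 : ℝ) ≤ k := by exact_mod_cast hk_odd.pos
  have hk_lt : (k : ℝ) + 1 ≤ 2 * n := by exact_mod_cast Nat.mod_lt m (by omega)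
  have hm_eq : (m : ℝ) * φ = k * φ + (m / (2 * n) : ℕ) * π := by
    rw [← h2nφ, ← congrArg Nat.cast (Nat.mod_add_div m (2 * n))]; push_cast; ring
  rw [hm_eq, cos_add_nat_mul_pi, abs_mul, abs_neg_one_pow, one_mul]
  exact abs_cos_le_cos_of_le_of_le_pi_sub hφ (by nlinarith) (by nlinarith)

lemma abs_cos_sub_tan_mul_sin_le_one {φ x : ℝ} (h : |cos (x + φ)| ≤ cos φ) :
    |cos x - tan φ * sin x| ≤ 1 := by
  rcases (abs_nonneg _ |>.trans h).eq_or_lt with hcos | hcos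
  · -- `tan φ = sin φ / cos φ` is the junk value `0` here
    simpa [tan_eq_sin_div_cos, ← hcos] using abs_cos_le_one x
  · have key : (cos x - tan φ * sin x) * cos φ = cos (x + φ) := by
      rw [tan_eq_sin_div_cos, cos_add]; field_simp
    refine le_of_mul_le_mul_right ?_ hcos
    rwa [one_mul, ← abs_of_pos hcos, ← abs_mul, key, abs_of_pos hcos]

def IsNormalForm (φ : ℝ) (M : Matrix (Fin 2) (Fin 2) ℝ) : Prop :=
  ∃ (α : ℝ) (q s r : ℕ), |α| ≤ 1 ∧ (r = 0 ∨ r = 1) ∧ M = α • (R φ ^ q * P φ ^ r * R φ ^ s)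

lemma isNormalForm_one (φ : ℝ) : IsNormalForm φ 1 :=
  ⟨1, 0, 0, 0, by simp, Or.inl rfl, by simp⟩

lemma IsNormalForm.R_mul {φ : ℝ} {M : Matrix (Fin 2) (Fin 2) ℝ} (hM : IsNormalForm φ M) :
    IsNormalForm φ (R φ * M) := by
  obtain ⟨α, q, s, r, hα, hr, rfl⟩ := hM
  refine ⟨α, q + 1, s, r, hα, hr, ?_⟩
  rw [Matrix.mul_smul, pow_succ', mul_assoc, mul_assoc, mul_assoc]

lemma IsNormalForm.P_mul {n : ℕ} (hn : 0 < n) {M : Matrix (Fin 2) (Fin 2) ℝ}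
    (hM : IsNormalForm (π / (2 * n)) M) : IsNormalForm (π / (2 * n)) (P (π / (2 * n)) * M) := by
  set φ := π / (2 * n)
  obtain ⟨α, q, s, r, hα, hr, rfl⟩ := hM
  rcases hr with rfl | rfl
  · refine ⟨α, 0, q + s, 1, hα, Or.inr rfl, ?_⟩
    rw [Matrix.mul_smul, pow_add]; simp only [pow_zero, pow_one, one_mul, mul_one]
  · set c := cos (2 * (q * φ)) - tan φ * sin (2 * (q * φ))
    have hc : |c| ≤ 1 := by
      apply abs_cos_sub_tan_mul_sin_le_one
      have h := abs_cos_odd_mul_le (m := 2 * q + 1) hn (odd_two_mul_add_one q)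
      convert h using 3; push_cast; ring
    refine ⟨α * c, 0, s, 1, ?_, Or.inr rfl, ?_⟩
    · rw [abs_mul]; exact mul_le_one₀ hα (abs_nonneg c) hc
    · rw [Matrix.mul_smul, pow_one, pow_zero, one_mul, ← mul_assoc, ← mul_assoc, R_pow,
        P_mul_R_mul_P, Matrix.smul_mul, smul_smul]

theorem stmt5 (n : ℕ) (hn : 1 ≤ n) (φ : ℝ) (hφ : φ = Real.pi / (2 * (n : ℝ)))
    (l : List (Matrix (Fin 2) (Fin 2) ℝ)) (hl : ∀ B ∈ l, B = P φ ∨ B = R φ) :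
    ∃ (α : ℝ) (q s r : ℕ), |α| ≤ 1 ∧ (r = 0 ∨ r = 1) ∧
      l.prod = α • ((R φ) ^ q * (P φ) ^ r * (R φ) ^ s) := by
  subst hφ
  induction l with
  | nil => exact isNormalForm_one _
  | cons B t ih =>
    rw [List.prod_cons]
    have ht : IsNormalForm _ t.prod := ih fun C hC => hl C (List.mem_cons_of_mem _ hC)
    rcases hl B List.mem_cons_self with rfl | rfl
    · exact ht.P_mul hn
    · exact ht.R_mul
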